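/- arXiv:1612.06408 — 9 statements merged into one kernel-verified Lean document; each statement's English description precedes it below -/
import Mathlib

section
/- Let λ > 0, 0 ≤ p ≤ 1 and let n ≥ 1 be an integer. Then ∫₀^∞ e^{-t} · ( ∑_{j=n-1}^∞ (e^{-λt} (λt)^j / j!) · p (1-p)^{j+1-n} ) dt = (λ/(λ+1))^{n-1} · p/(λp+1). (This is the probability that exactly n individuals survive the collapse in the Poisson growth with geometric catastrophe scheme.) -/
/-!
Integrating out the `Exp(1)` lifetime turns the Poisson law of the growth into a geometric one:
`∫₀^∞ e^{-t} e^{-λt} (λt)^j / j! dt = λ^j / (λ+1)^{j+1}`, a Gamma integral. All terms are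
nonnegative, so integral and sum commute, and what remains is a geometric series of ratio
`(1 - p) λ / (λ + 1)`.
-/

open MeasureTheory Real Set
open scoped Nat

lemma integral_tsum_of_nonneg_of_hasSum {α ι : Type*} [MeasurableSpace α] {μ : Measure α}
    [Countable ι] {F : ι → α → ℝ} {a : ℝ} (hF_int : ∀ i, Integrable (F i) μ)
    (hF_nonneg : ∀ i, 0 ≤ᵐ[μ] F i) (hF_sum : HasSum (fun i ↦ ∫ x, F i x ∂μ) a) :
    ∫ x, ∑' i, F i x ∂μ = a := by
  have hnorm : ∀ i, ∫ x, ‖F i x‖ ∂μ = ∫ x, F i x ∂μ := fun i ↦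
    integral_congr_ae <| (hF_nonneg i).mono fun x hx ↦ Real.norm_of_nonneg hx
  rw [← integral_tsum_of_summable_integral_norm hF_int
    (by simpa only [hnorm] using hF_sum.summable), hF_sum.tsum_eq]

lemma integral_pow_mul_exp_neg_mul_Ioi {r : ℝ} (hr : 0 < r) (j : ℕ) :
    ∫ t in Ioi (0 : ℝ), t ^ j * exp (-(r * t)) = j ! / r ^ (j + 1) := by
  have h := integral_rpow_mul_exp_neg_mul_Ioi (a := (j : ℝ) + 1) (by positivity) hr
  rw [add_sub_cancel_right, Gamma_nat_eq_factorial, ← Nat.cast_succ, rpow_natCast] at h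
  simp_rw [← rpow_natCast _ j, h, Nat.succ_eq_add_one, one_div, inv_pow]
  ring

lemma integrableOn_pow_mul_exp_neg_mul_Ioi {r : ℝ} (hr : 0 < r) (j : ℕ) :
    IntegrableOn (fun t : ℝ ↦ t ^ j * exp (-(r * t))) (Ioi 0) :=
  .of_integral_ne_zero (by rw [integral_pow_mul_exp_neg_mul_Ioi hr]; positivity)

lemma exp_neg_mul_poisson_term_eq (l t : ℝ) (j : ℕ) :
    exp (-t) * (exp (-(l * t)) * (l * t) ^ j / j !) =
      l ^ j / j ! * (t ^ j * exp (-((l + 1) * t))) := by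
  rw [add_mul, one_mul, neg_add, exp_add, mul_pow]
  ring

lemma integrableOn_exp_neg_mul_poisson_term {l : ℝ} (hl : 0 ≤ l) (j : ℕ) :
    IntegrableOn (fun t ↦ exp (-t) * (exp (-(l * t)) * (l * t) ^ j / j !)) (Ioi 0) := by
  simp_rw [exp_neg_mul_poisson_term_eq]
  exact (integrableOn_pow_mul_exp_neg_mul_Ioi (by positivity) j).const_mul _

lemma integral_exp_neg_mul_poisson_term {l : ℝ} (hl : 0 ≤ l) (j : ℕ) :
    ∫ t in Ioi (0 : ℝ), exp (-t) * (exp (-(l * t)) * (l * t) ^ j / j !) =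
      l ^ j / (l + 1) ^ (j + 1) := by
  simp_rw [exp_neg_mul_poisson_term_eq, integral_const_mul,
    integral_pow_mul_exp_neg_mul_Ioi (by positivity : 0 < l + 1)]
  field_simp

lemma hasSum_geometric_poisson_mixture {l p : ℝ} (hl : 0 ≤ l) (hp0 : 0 ≤ p) (hp1 : p ≤ 1)
    (m : ℕ) :
    HasSum (fun k : ℕ ↦ p * (1 - p) ^ k * (l ^ (k + m) / (l + 1) ^ (k + m + 1)))
      ((l / (l + 1)) ^ m * (p / (l * p + 1))) := by
  have hq0 : 0 ≤ (1 - p) * (l / (l + 1)) := by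
    have : 0 ≤ 1 - p := by linarith
    positivity
  have hq1 : (1 - p) * (l / (l + 1)) < 1 := by
    rw [mul_div_assoc', div_lt_one (by positivity)]
    nlinarith
  have hden : 1 - (1 - p) * (l / (l + 1)) = (l * p + 1) / (l + 1) := by
    field_simp
    ring
  have hvalue : p * (l / (l + 1)) ^ m / (l + 1) * (1 - (1 - p) * (l / (l + 1)))⁻¹ =
      (l / (l + 1)) ^ m * (p / (l * p + 1)) := by
    rw [hden]
    field_simp
  rw [← hvalue]
  exact ((hasSum_geometric_of_lt_one hq0 hq1).mul_left _).congr_fun fun k ↦ by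
    rw [mul_pow, div_pow, div_pow]
    field_simp
    ring

theorem poisson_geometric_n_survivors_general (l p : ℝ) (hl : 0 < l) (hp0 : 0 ≤ p) (hp1 : p ≤ 1)
    (n : ℕ) :
    ∫ t in Set.Ioi (0:ℝ), Real.exp (-t) *
      ∑' k : ℕ, (Real.exp (-(l * t)) * (l * t) ^ (k + (n - 1)) /
        (Nat.factorial (k + (n - 1)))) * p * (1 - p) ^ k
      = (l / (l + 1)) ^ (n - 1) * (p / (l * p + 1)) := by
  set F : ℕ → ℝ → ℝ := fun k t ↦
    p * (1 - p) ^ k * (exp (-t) * (exp (-(l * t)) * (l * t) ^ (k + (n - 1)) / (k + (n - 1))!))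
  have hF_int (k : ℕ) : IntegrableOn (F k) (Ioi 0) :=
    (integrableOn_exp_neg_mul_poisson_term hl.le _).const_mul _
  have hF_nonneg (k : ℕ) : 0 ≤ᵐ[volume.restrict (Ioi 0)] F k :=
    (ae_restrict_mem measurableSet_Ioi).mono fun t (ht : 0 < t) ↦ by
      have : 0 ≤ 1 - p := by linarith
      positivity
  have hF_sum :
      HasSum (fun k ↦ ∫ t in Ioi 0, F k t) ((l / (l + 1)) ^ (n - 1) * (p / (l * p + 1))) := by
    simp only [F, integral_const_mul, integral_exp_neg_mul_poisson_term hl.le]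
    exact hasSum_geometric_poisson_mixture hl.le hp0 hp1 (n - 1)
  rw [← integral_tsum_of_nonneg_of_hasSum hF_int hF_nonneg hF_sum]
  congr 1 with t
  rw [← tsum_mul_left]
  exact tsum_congr fun k ↦ by ring

/-- Probability that exactly `n ≥ 1` individuals survive the collapse in the Poisson
growth (rate `l`) with geometric catastrophe (parameter `p`) scheme.  The sum over
`j` from `n-1` to `∞` is written by reindexing `j = k + (n-1)`. -/
theorem poisson_geometric_n_survivors (l p : ℝ) (hl : 0 < l) (hp0 : 0 ≤ p) (hp1 : p ≤ 1)
    (n : ℕ) (hn : 1 ≤ n) :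
    ∫ t in Set.Ioi (0:ℝ), Real.exp (-t) *
      ∑' k : ℕ, (Real.exp (-(l * t)) * (l * t) ^ (k + (n - 1)) /
        (Nat.factorial (k + (n - 1)))) * p * (1 - p) ^ k
      = (l / (l + 1)) ^ (n - 1) * (p / (l * p + 1)) :=
  poisson_geometric_n_survivors_general l p hl hp0 hp1 n
end

section
/- Let λ > 0 and 0 < p ≤ 1. Then ∫₀^∞ e^{-t} · ( ∑_{j=1}^∞ e^{-λt} (1-e^{-λt})^{j-1} (1-p)^j ) dt = ((1-p)/(λ+1)) · ∑_{k=0}^∞ k! (1-p)^k / ((2+1/λ)_k), where (a)_k = a(a+1)⋯(a+k-1) is the Pochhammer symbol (with (a)_0 = 1). (The right-hand side equals ((1-p)/(λ+1)) · ₂F₁(1,1; 2+1/λ; 1-p); this is the probability that no individual survives the collapse in the Yule growth with binomial catastrophe scheme.) -/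
/-!
Expanding the geometric law of the colony size turns the left-hand side into
`∑ₖ (1 - p)^(k+1) ∫₀^∞ e^{-(1+λ)t} (1 - e^{-λt})^k dt` (the series is dominated by
`e^{-(1+λ)t} ∑ₖ (1 - p)^k`, so it can be integrated termwise). Each integral is a Beta
integral, `∫₀^∞ e^{-at} (1 - e^{-λt})^k dt = k! / (λ (a/λ)_{k+1})`, which follows by
induction on `k` from `(1 - e^{-λt})^{k+1} = (1 - e^{-λt})^k - e^{-λt} (1 - e^{-λt})^k`.
For `a = 1 + λ` this is `k! / ((λ + 1) (2 + 1/λ)_k)`.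
-/

open MeasureTheory Real Set Polynomial
open scoped Nat

theorem integral_tsum_pow_mul_of_dominated {α : Type*} [MeasurableSpace α] {μ : Measure α}
    {f : ℕ → α → ℝ} {g : α → ℝ} {q : ℝ} (hq : |q| < 1) (hf : ∀ k, Integrable (f k) μ)
    (hg : Integrable g μ) (hfg : ∀ k, ∀ᵐ x ∂μ, ‖f k x‖ ≤ g x) :
    ∫ x, ∑' k, q ^ k * f k x ∂μ = ∑' k, q ^ k * ∫ x, f k x ∂μ := by
  have hbound : ∀ k, ∫ x, ‖q ^ k * f k x‖ ∂μ ≤ |q| ^ k * ∫ x, g x ∂μ := by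
    intro k
    simp only [norm_mul, norm_pow, Real.norm_eq_abs]
    rw [integral_const_mul]
    exact mul_le_mul_of_nonneg_left (integral_mono_ae (hf k).norm hg (hfg k)) (by positivity)
  have hsum : Summable fun k => ∫ x, ‖q ^ k * f k x‖ ∂μ :=
    .of_nonneg_of_le (fun k => integral_nonneg fun x => norm_nonneg _) hbound
      ((summable_geometric_of_lt_one (abs_nonneg q) hq).mul_right _)
  rw [← integral_tsum_of_summable_integral_norm (fun k => (hf k).const_mul (q ^ k)) hsum]
  exact tsum_congr fun k => integral_const_mul _ _

theorem ascPochhammer_succ_eval_left {S : Type*} [CommSemiring S] (n : ℕ) (x : S) :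
    (ascPochhammer S (n + 1)).eval x = x * (ascPochhammer S n).eval (x + 1) := by
  rw [ascPochhammer_succ_left, eval_mul, eval_X, eval_comp, eval_add, eval_X, eval_one]

section BetaIntegral

variable {a l : ℝ}

theorem integrableOn_exp_neg_mul_Ioi (ha : 0 < a) :
    IntegrableOn (fun t => exp (-(a * t))) (Ioi 0) := by
  simpa only [neg_mul] using integrableOn_exp_mul_Ioi (neg_lt_zero.2 ha) 0

theorem integral_exp_neg_mul_Ioi (ha : 0 < a) : ∫ t in Ioi 0, exp (-(a * t)) = a⁻¹ := by
  simp only [← neg_mul, integral_exp_mul_Ioi (neg_lt_zero.2 ha), mul_zero, exp_zero,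
    neg_div_neg_eq, one_div]

theorem ae_norm_exp_neg_mul_mul_one_sub_exp_pow_le (a : ℝ) (hl : 0 ≤ l) (k : ℕ) :
    ∀ᵐ t ∂volume.restrict (Ioi 0),
      ‖exp (-(a * t)) * (1 - exp (-(l * t))) ^ k‖ ≤ exp (-(a * t)) := by
  refine (ae_restrict_iff' measurableSet_Ioi).2 (.of_forall fun t ht => ?_)
  have h0 : 0 ≤ 1 - exp (-(l * t)) :=
    sub_nonneg.2 (exp_le_one_iff.2 (neg_nonpos.2 (mul_nonneg hl (le_of_lt ht))))
  have h1 : 1 - exp (-(l * t)) ≤ 1 := sub_le_self _ (exp_pos _).le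
  rw [norm_mul, norm_of_nonneg (exp_pos _).le, norm_of_nonneg (pow_nonneg h0 k)]
  exact mul_le_of_le_one_right (exp_pos _).le (pow_le_one₀ h0 h1)

theorem integrableOn_exp_neg_mul_mul_one_sub_exp_pow (ha : 0 < a) (hl : 0 ≤ l) (k : ℕ) :
    IntegrableOn (fun t => exp (-(a * t)) * (1 - exp (-(l * t))) ^ k) (Ioi 0) :=
  (integrableOn_exp_neg_mul_Ioi ha).mono' (by fun_prop)
    (ae_norm_exp_neg_mul_mul_one_sub_exp_pow_le a hl k)

theorem integral_exp_neg_mul_mul_one_sub_exp_pow (hl : 0 < l) (k : ℕ) (ha : 0 < a) :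
    ∫ t in Ioi 0, exp (-(a * t)) * (1 - exp (-(l * t))) ^ k
      = (k ! : ℝ) / (l * (ascPochhammer ℝ (k + 1)).eval (a / l)) := by
  induction k generalizing a with
  | zero =>
    simp [integral_exp_neg_mul_Ioi ha, mul_div_cancel₀ a hl.ne']
  | succ k ih =>
    have hal : 0 < a + l := by linarith
    have hsplit : ∀ t, exp (-(a * t)) * (1 - exp (-(l * t))) ^ (k + 1)
        = exp (-(a * t)) * (1 - exp (-(l * t))) ^ k
          - exp (-((a + l) * t)) * (1 - exp (-(l * t))) ^ k := fun t => by
      rw [add_mul, neg_add, exp_add, pow_succ]; ring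
    rw [setIntegral_congr_fun measurableSet_Ioi fun t _ => hsplit t,
      integral_sub (integrableOn_exp_neg_mul_mul_one_sub_exp_pow ha hl.le k)
        (integrableOn_exp_neg_mul_mul_one_sub_exp_pow hal hl.le k), ih ha, ih hal]
    have hx : (a + l) / l = a / l + 1 := by field_simp
    set x := a / l
    have hright := ascPochhammer_succ_eval (k + 1) x
    have hleft := ascPochhammer_succ_eval_left (k + 1) x
    have hA := ascPochhammer_pos (k + 1) x (by positivity)
    have hB := ascPochhammer_pos (k + 1) (x + 1) (by positivity)
    have hC := ascPochhammer_pos (k + 2) x (by positivity)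
    rw [hx, div_sub_div _ _ (by positivity) (by positivity),
      div_eq_div_iff (by positivity) (by positivity)]
    push_cast [Nat.factorial_succ] at hright ⊢
    linear_combination (l ^ 2 * k ! * (ascPochhammer ℝ (k + 1)).eval (x + 1)) * hright
      - (l ^ 2 * k ! * (ascPochhammer ℝ (k + 1)).eval x) * hleft

end BetaIntegral

/-- Probability that no individual survives the collapse in the Yule growth
(rate `l`) with binomial catastrophe (parameter `p`) scheme, expressed via the
hypergeometric series `₂F₁(1,1;2+1/λ;1-p)` written with Pochhammer symbols.
The sum over `j ≥ 1` is written by reindexing `j = k + 1`. -/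
theorem yule_binomial_no_survivor (l p : ℝ) (hl : 0 < l) (hp0 : 0 < p) (hp1 : p ≤ 1) :
    ∫ t in Set.Ioi (0:ℝ), Real.exp (-t) *
      ∑' k : ℕ, Real.exp (-(l * t)) * (1 - Real.exp (-(l * t))) ^ k * (1 - p) ^ (k + 1)
      = ((1 - p) / (l + 1)) *
        ∑' k : ℕ, (Nat.factorial k : ℝ) * (1 - p) ^ k /
          (ascPochhammer ℝ k).eval (2 + 1 / l) := by
  have hq : |1 - p| < 1 := abs_lt.2 ⟨by linarith, by linarith⟩
  have h1l : 0 < 1 + l := by linarith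
  have hexpand : ∀ t, exp (-t) *
      ∑' k : ℕ, exp (-(l * t)) * (1 - exp (-(l * t))) ^ k * (1 - p) ^ (k + 1)
      = (1 - p) * ∑' k : ℕ, (1 - p) ^ k * (exp (-((1 + l) * t)) * (1 - exp (-(l * t))) ^ k) := by
    intro t
    rw [← tsum_mul_left, ← tsum_mul_left]
    congr with k
    rw [add_mul, neg_add, one_mul, exp_add]
    ring
  have hpoch : ∀ k : ℕ, l * (ascPochhammer ℝ (k + 1)).eval ((1 + l) / l)
      = (l + 1) * (ascPochhammer ℝ k).eval (2 + 1 / l) := by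
    intro k
    rw [ascPochhammer_succ_eval_left, show (1 + l) / l + 1 = 2 + 1 / l by field_simp; ring,
      ← mul_assoc, mul_div_cancel₀ _ hl.ne', add_comm 1 l]
  simp_rw [hexpand]
  rw [integral_const_mul, integral_tsum_pow_mul_of_dominated hq
    (fun k => integrableOn_exp_neg_mul_mul_one_sub_exp_pow h1l hl.le k)
    (integrableOn_exp_neg_mul_Ioi h1l)
    (ae_norm_exp_neg_mul_mul_one_sub_exp_pow_le _ hl.le),
    ← tsum_mul_left, ← tsum_mul_left]
  congr with k
  rw [integral_exp_neg_mul_mul_one_sub_exp_pow hl k h1l, hpoch]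
  field_simp
end

section
/- Let λ > 0, 0 < p ≤ 1 and 0 ≤ s ≤ 1. Then ∑_{n=0}^∞ s^n ∫₀^∞ e^{-t} ( ∑_{k=max(n,1)}^∞ e^{-λt}(1-e^{-λt})^{k-1} C(k,n) p^n (1-p)^{k-n} ) dt = ((ps+1-p)/(λ+1)) · ∑_{k=0}^∞ k! (ps+1-p)^k / ((2+1/λ)_k). That is, the probability generating function E(s^N) of the number of survivors in the Yule growth with binomial catastrophe scheme equals ((ps+1-p)/(λ+1)) · ₂F₁(1,1; 2+1/λ; p(s-1)+1), with the hypergeometric function written as the series ∑_{k≥0} k! x^k/(2+1/λ)_k at x = ps+1-p. -/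
/-!
Given `T = t`, the colony size `X_t` is geometric with success probability `u = e^{-λt}`,
and binomial thinning turns its generating function `∑ₖ P(X_t = k) yᵏ` at `y = ps + 1 - p`
into the generating function of `N`. All terms are nonnegative, so in `ℝ≥0∞` the sums over
`n`, `k` and the integral over `t` may be interchanged freely; the values are finite since
the conditional law of `N` has mass one. What remains is
`∫₀^∞ e^{-(1+λ)t} (1 - e^{-λt})^j dt = j! / ((λ + 1) (2 + 1/λ)_j)`, which follows by
induction on `j` from `(1 - e^{-λt})^{j+1} = (1 - e^{-λt})^j - e^{-λt} (1 - e^{-λt})^j`: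
each step shifts the exponential rate by `λ`.
-/

open MeasureTheory Real Set
open scoped ENNReal Nat

lemma factorial_div_ascPochhammer_sub {b : ℝ} (hb : 0 < b) (j : ℕ) :
    j ! / (ascPochhammer ℝ (j + 1)).eval b - j ! / (ascPochhammer ℝ (j + 1)).eval (b + 1)
      = (j + 1)! / (ascPochhammer ℝ (j + 2)).eval b := by
  have hright : (ascPochhammer ℝ (j + 2)).eval b
      = (ascPochhammer ℝ (j + 1)).eval b * (b + (j + 1)) := by
    rw [ascPochhammer_succ_eval]; push_cast; ring
  have hleft : (ascPochhammer ℝ (j + 2)).eval b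
      = b * (ascPochhammer ℝ (j + 1)).eval (b + 1) := by
    rw [ascPochhammer_succ_left, Polynomial.eval_mul, Polynomial.eval_comp]; simp
  have h0 := ascPochhammer_pos (j + 1) b hb
  have h1 := ascPochhammer_pos (j + 1) (b + 1) (by positivity)
  have h2 := ascPochhammer_pos (j + 2) b hb
  rw [div_sub_div _ _ h0.ne' h1.ne', div_eq_div_iff (mul_pos h0 h1).ne' h2.ne',
    Nat.factorial_succ]
  push_cast
  linear_combination (j ! : ℝ) * ((ascPochhammer ℝ (j + 1)).eval (b + 1) * hright
    - (ascPochhammer ℝ (j + 1)).eval b * hleft)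

lemma one_sub_exp_neg_mul_mem_Icc {l t : ℝ} (hlt : 0 ≤ l * t) :
    1 - exp (-(l * t)) ∈ Set.Icc (0 : ℝ) 1 :=
  ⟨sub_nonneg.mpr (exp_le_one_iff.mpr (by linarith)), by linarith [exp_pos (-(l * t))]⟩

lemma integrableOn_exp_mul_one_sub_exp_pow {a l : ℝ} (ha : 0 < a) (hl : 0 ≤ l) (j : ℕ) :
    IntegrableOn (fun t => exp (-(a * t)) * (1 - exp (-(l * t))) ^ j) (Ioi 0) := by
  refine (exp_neg_integrableOn_Ioi 0 ha).mono' (by fun_prop) ?_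
  filter_upwards [ae_restrict_mem measurableSet_Ioi] with t ht
  obtain ⟨hq0, hq1⟩ := one_sub_exp_neg_mul_mem_Icc (mul_nonneg hl (le_of_lt ht))
  rw [norm_mul, norm_pow, norm_of_nonneg (exp_pos _).le, norm_of_nonneg hq0, neg_mul]
  exact mul_le_of_le_one_right (exp_pos _).le (pow_le_one₀ hq0 hq1)

lemma integral_exp_mul_one_sub_exp_pow {l : ℝ} (hl : 0 < l) (j : ℕ) {a : ℝ} (ha : 0 < a) :
    ∫ t in Ioi 0, exp (-(a * t)) * (1 - exp (-(l * t))) ^ j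
      = j ! / (ascPochhammer ℝ (j + 1)).eval (a / l) / l := by
  induction j generalizing a with
  | zero =>
    have h := integral_exp_mul_Ioi (neg_neg_of_pos ha) 0
    simp only [neg_mul, mul_zero, exp_zero] at h
    simp [h]
    field_simp
  | succ j ih =>
    have hsplit : ∀ t, exp (-(a * t)) * (1 - exp (-(l * t))) ^ (j + 1)
        = exp (-(a * t)) * (1 - exp (-(l * t))) ^ j
          - exp (-((a + l) * t)) * (1 - exp (-(l * t))) ^ j := fun t => by
      rw [show -((a + l) * t) = -(a * t) + -(l * t) by ring, exp_add]; ring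
    have hal : 0 < a + l := by positivity
    simp_rw [hsplit]
    rw [integral_sub (integrableOn_exp_mul_one_sub_exp_pow ha hl.le j)
      (integrableOn_exp_mul_one_sub_exp_pow hal hl.le j), ih ha, ih hal,
      show (a + l) / l = a / l + 1 by field_simp, ← sub_div,
      factorial_div_ascPochhammer_sub (by positivity)]

/-- The generating function of a binomial thinning. -/
lemma ENNReal.tsum_pow_mul_tsum_mul_choose (w : ℕ → ℝ≥0∞) (a b z : ℝ≥0∞) :
    ∑' n, z ^ n * ∑' k, w k * (k.choose n * a ^ n * b ^ (k - n))
      = ∑' k, w k * (a * z + b) ^ k := by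
  simp_rw [← ENNReal.tsum_mul_left]
  rw [ENNReal.tsum_comm]
  refine tsum_congr fun k => ?_
  rw [tsum_eq_sum (s := Finset.range (k + 1)), add_pow, Finset.mul_sum]
  · exact Finset.sum_congr rfl fun n _ => by rw [mul_pow]; ring
  · intro n hn
    rw [Nat.choose_eq_zero_of_lt (by simpa using hn)]
    simp

lemma ENNReal.tsum_ofReal_mul_one_sub_pow {u : ℝ} (hu0 : 0 < u) (hu1 : u ≤ 1) :
    ∑' j : ℕ, ENNReal.ofReal (u * (1 - u) ^ j) = 1 := by
  have hsub : 1 - ENNReal.ofReal (1 - u) = ENNReal.ofReal u := by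
    rw [← ENNReal.ofReal_one, ← ENNReal.ofReal_sub _ (by linarith), _root_.sub_sub_cancel]
  simp_rw [ENNReal.ofReal_mul hu0.le, ENNReal.ofReal_pow (sub_nonneg.mpr hu1)]
  rw [ENNReal.tsum_mul_left, ENNReal.tsum_geometric, hsub,
    ENNReal.mul_inv_cancel (ENNReal.ofReal_pos.mpr hu0).ne' ENNReal.ofReal_ne_top]

/-- `P(X_t = k)` for the Yule process of rate `l`. -/
noncomputable def yuleProb (l t : ℝ) (k : ℕ) : ℝ :=
  if k = 0 then 0 else exp (-(l * t)) * (1 - exp (-(l * t))) ^ (k - 1)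

/-- `P(X_t = k, N = n)`, written exactly as the summand of `yule_binomial_pgf`. -/
noncomputable def survivorWeight (l p : ℝ) (n k : ℕ) (t : ℝ) : ℝ :=
  if max n 1 ≤ k then
    exp (-(l * t)) * (1 - exp (-(l * t))) ^ (k - 1) * (k.choose n : ℝ) * p ^ n * (1 - p) ^ (k - n)
  else 0

lemma yuleProb_nonneg {l t : ℝ} (hlt : 0 ≤ l * t) (k : ℕ) : 0 ≤ yuleProb l t k := by
  unfold yuleProb
  split_ifs
  · exact le_rfl
  · exact mul_nonneg (exp_pos _).le (pow_nonneg (one_sub_exp_neg_mul_mem_Icc hlt).1 _)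

lemma tsum_ofReal_yuleProb_mul_pow (l t : ℝ) (y : ℝ≥0∞) :
    ∑' k, ENNReal.ofReal (yuleProb l t k) * y ^ k
      = ∑' j : ℕ, ENNReal.ofReal (exp (-(l * t)) * (1 - exp (-(l * t))) ^ j) * y ^ (j + 1) := by
  rw [tsum_eq_zero_add' ENNReal.summable]
  simp [yuleProb]

lemma survivorWeight_eq (l p : ℝ) (n k : ℕ) (t : ℝ) :
    survivorWeight l p n k t = yuleProb l t k * (k.choose n * p ^ n * (1 - p) ^ (k - n)) := by
  unfold survivorWeight yuleProb
  rcases Nat.eq_zero_or_pos k with rfl | hk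
  · simp
  rcases le_or_gt n k with hnk | hkn
  · rw [if_pos (max_le hnk hk), if_neg hk.ne']; ring
  · rw [if_neg (fun h => hkn.not_ge (le_of_max_le_left h)), Nat.choose_eq_zero_of_lt hkn]
    simp

lemma survivorWeight_nonneg {l p t : ℝ} (hlt : 0 ≤ l * t) (hp0 : 0 ≤ p) (hp1 : p ≤ 1)
    (n k : ℕ) : 0 ≤ survivorWeight l p n k t := by
  rw [survivorWeight_eq]
  have := sub_nonneg.mpr hp1
  exact mul_nonneg (yuleProb_nonneg hlt k) (by positivity)

lemma ofReal_survivorWeight {p : ℝ} (hp0 : 0 ≤ p) (hp1 : p ≤ 1) (l : ℝ) (n k : ℕ)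
    (t : ℝ) :
    ENNReal.ofReal (survivorWeight l p n k t) = ENNReal.ofReal (yuleProb l t k) *
      (k.choose n * ENNReal.ofReal p ^ n * ENNReal.ofReal (1 - p) ^ (k - n)) := by
  have := sub_nonneg.mpr hp1
  rw [survivorWeight_eq, ENNReal.ofReal_mul' (by positivity), ENNReal.ofReal_mul (by positivity),
    ENNReal.ofReal_mul (by positivity), ENNReal.ofReal_natCast, ENNReal.ofReal_pow hp0,
    ENNReal.ofReal_pow this]

lemma measurable_survivorWeight (l p : ℝ) (n k : ℕ) : Measurable (survivorWeight l p n k) := by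
  unfold survivorWeight
  split_ifs <;> fun_prop

lemma tsum_pow_mul_tsum_ofReal_survivorWeight {p s : ℝ} (hp0 : 0 ≤ p) (hp1 : p ≤ 1)
    (hs0 : 0 ≤ s) (l t : ℝ) :
    ∑' n, ENNReal.ofReal s ^ n * ∑' k, ENNReal.ofReal (survivorWeight l p n k t)
      = ∑' j : ℕ, ENNReal.ofReal (exp (-(l * t)) * (1 - exp (-(l * t))) ^ j)
          * ENNReal.ofReal (p * s + 1 - p) ^ (j + 1) := by
  simp_rw [ofReal_survivorWeight hp0 hp1]
  rw [ENNReal.tsum_pow_mul_tsum_mul_choose, ← ENNReal.ofReal_mul hp0,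
    ← ENNReal.ofReal_add (by positivity) (by linarith), ← add_sub_assoc,
    tsum_ofReal_yuleProb_mul_pow]

lemma tsum_ofReal_survivorWeight_le_one {l p t : ℝ} (hlt : 0 ≤ l * t) (hp0 : 0 ≤ p)
    (hp1 : p ≤ 1) (n : ℕ) : ∑' k, ENNReal.ofReal (survivorWeight l p n k t) ≤ 1 :=
  calc ∑' k, ENNReal.ofReal (survivorWeight l p n k t)
      = ENNReal.ofReal 1 ^ n * ∑' k, ENNReal.ofReal (survivorWeight l p n k t) := by simp
    _ ≤ ∑' m, ENNReal.ofReal 1 ^ m * ∑' k, ENNReal.ofReal (survivorWeight l p m k t) :=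
      ENNReal.le_tsum n
    _ = 1 := by
      rw [tsum_pow_mul_tsum_ofReal_survivorWeight hp0 hp1 zero_le_one]
      simpa using ENNReal.tsum_ofReal_mul_one_sub_pow (exp_pos (-(l * t)))
        (exp_le_one_iff.mpr (by linarith))

/-- The density of `(T, N)` at `(t, n)`. -/
noncomputable def survivorDensity (l p : ℝ) (n : ℕ) (t : ℝ) : ℝ≥0∞ :=
  ENNReal.ofReal (exp (-t)) * ∑' k, ENNReal.ofReal (survivorWeight l p n k t)

lemma measurable_survivorDensity (l p : ℝ) (n : ℕ) : Measurable (survivorDensity l p n) :=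
  (by fun_prop : Measurable fun t => ENNReal.ofReal (exp (-t))).mul <|
    .tsum fun k => (measurable_survivorWeight l p n k).ennreal_ofReal

lemma survivorDensity_le {l p t : ℝ} (hlt : 0 ≤ l * t) (hp0 : 0 ≤ p) (hp1 : p ≤ 1)
    (n : ℕ) :
    survivorDensity l p n t ≤ ENNReal.ofReal (exp (-t)) :=
  mul_le_of_le_one_right' (tsum_ofReal_survivorWeight_le_one hlt hp0 hp1 n)

lemma lintegral_survivorDensity_le_one {l p : ℝ} (hl : 0 ≤ l) (hp0 : 0 ≤ p) (hp1 : p ≤ 1)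
    (n : ℕ) : ∫⁻ t in Ioi 0, survivorDensity l p n t ≤ 1 :=
  calc ∫⁻ t in Ioi 0, survivorDensity l p n t
      ≤ ∫⁻ t in Ioi 0, ENNReal.ofReal (exp (-t)) :=
        setLIntegral_mono' measurableSet_Ioi fun t ht =>
          survivorDensity_le (mul_nonneg hl (le_of_lt ht)) hp0 hp1 n
    _ = 1 := by
      have hint : IntegrableOn (fun t => exp (-t)) (Ioi 0) := by
        simpa using exp_neg_integrableOn_Ioi 0 one_pos
      rw [← ofReal_integral_eq_lintegral_ofReal hint (ae_of_all _ fun t => (exp_pos _).le),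
        integral_exp_neg_Ioi_zero, ENNReal.ofReal_one]

lemma integral_exp_neg_mul_tsum_survivorWeight {l p : ℝ} (hl : 0 ≤ l) (hp0 : 0 ≤ p)
    (hp1 : p ≤ 1) (n : ℕ) :
    ∫ t in Ioi 0, exp (-t) * ∑' k, survivorWeight l p n k t
      = (∫⁻ t in Ioi 0, survivorDensity l p n t).toReal := by
  have hfin : ∀ᵐ t ∂volume.restrict (Ioi 0), survivorDensity l p n t < ⊤ := by
    filter_upwards [ae_restrict_mem measurableSet_Ioi] with t ht
    exact (survivorDensity_le (mul_nonneg hl (le_of_lt ht)) hp0 hp1 n).trans_lt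
      ENNReal.ofReal_lt_top
  rw [← integral_toReal (measurable_survivorDensity l p n).aemeasurable hfin]
  refine setIntegral_congr_fun measurableSet_Ioi fun t ht => ?_
  rw [survivorDensity, ENNReal.toReal_mul, ENNReal.toReal_ofReal (exp_pos _).le,
    ENNReal.tsum_toReal_eq fun _ => ENNReal.ofReal_ne_top]
  simp_rw [ENNReal.toReal_ofReal (survivorWeight_nonneg (mul_nonneg hl (le_of_lt ht)) hp0 hp1 n _)]

/-- `P(X_T = j + 1)`. -/
noncomputable def collapseSizeProb (l : ℝ) (j : ℕ) : ℝ :=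
  j ! / ((l + 1) * (ascPochhammer ℝ j).eval (2 + 1 / l))

lemma collapseSizeProb_nonneg {l : ℝ} (hl : 0 < l) (j : ℕ) : 0 ≤ collapseSizeProb l j := by
  have := ascPochhammer_pos j (2 + 1 / l) (by positivity)
  unfold collapseSizeProb
  positivity

lemma integral_exp_neg_mul_exp_mul_one_sub_exp_pow {l : ℝ} (hl : 0 < l) (j : ℕ) :
    ∫ t in Ioi 0, exp (-t) * (exp (-(l * t)) * (1 - exp (-(l * t))) ^ j)
      = collapseSizeProb l j := by
  have hrate : ∀ t, exp (-t) * (exp (-(l * t)) * (1 - exp (-(l * t))) ^ j)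
      = exp (-((1 + l) * t)) * (1 - exp (-(l * t))) ^ j := fun t => by
    rw [← mul_assoc, ← exp_add]; ring_nf
  simp_rw [hrate]
  rw [integral_exp_mul_one_sub_exp_pow hl j (by positivity), ascPochhammer_succ_left,
    Polynomial.eval_mul, Polynomial.eval_comp]
  simp only [Polynomial.eval_X, Polynomial.eval_add, Polynomial.eval_one]
  rw [show (1 + l) / l + 1 = 2 + 1 / l by field_simp; ring, add_comm 1 l, collapseSizeProb]
  field_simp

lemma lintegral_ofReal_exp_neg_mul_exp_mul_one_sub_exp_pow {l : ℝ} (hl : 0 < l) (j : ℕ) :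
    ∫⁻ t in Ioi 0, ENNReal.ofReal (exp (-t) * (exp (-(l * t)) * (1 - exp (-(l * t))) ^ j))
      = ENNReal.ofReal (collapseSizeProb l j) := by
  have hint : IntegrableOn (fun t => exp (-t) * (exp (-(l * t)) * (1 - exp (-(l * t))) ^ j))
      (Ioi 0) := by
    refine (integrableOn_exp_mul_one_sub_exp_pow (a := 1 + l) (by positivity) hl.le j).congr_fun
      (fun t _ => ?_) measurableSet_Ioi
    rw [← mul_assoc, ← exp_add]; ring_nf
  rw [← integral_exp_neg_mul_exp_mul_one_sub_exp_pow hl j,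
    ofReal_integral_eq_lintegral_ofReal hint]
  filter_upwards [ae_restrict_mem measurableSet_Ioi] with t ht
  have hq0 := (one_sub_exp_neg_mul_mem_Icc (mul_nonneg hl.le (le_of_lt ht))).1
  exact mul_nonneg (exp_pos _).le (mul_nonneg (exp_pos _).le (pow_nonneg hq0 _))

lemma tsum_pow_mul_lintegral_survivorDensity {l p s : ℝ} (hl : 0 < l) (hp0 : 0 ≤ p)
    (hp1 : p ≤ 1) (hs0 : 0 ≤ s) :
    ∑' n, ENNReal.ofReal s ^ n * ∫⁻ t in Ioi 0, survivorDensity l p n t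
      = ∑' j : ℕ, ENNReal.ofReal (collapseSizeProb l j * (p * s + 1 - p) ^ (j + 1)) := by
  have hpointwise : ∀ t, ∑' n, ENNReal.ofReal s ^ n * survivorDensity l p n t
      = ∑' j : ℕ, ENNReal.ofReal (exp (-t) * (exp (-(l * t)) * (1 - exp (-(l * t))) ^ j))
          * ENNReal.ofReal (p * s + 1 - p) ^ (j + 1) := fun t => by
    simp_rw [survivorDensity, mul_left_comm (ENNReal.ofReal s ^ _), ENNReal.tsum_mul_left,
      tsum_pow_mul_tsum_ofReal_survivorWeight hp0 hp1 hs0, ← ENNReal.tsum_mul_left]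
    exact tsum_congr fun j => by rw [← mul_assoc, ← ENNReal.ofReal_mul (exp_pos _).le]
  have hx : 0 ≤ p * s + 1 - p := by nlinarith
  calc ∑' n, ENNReal.ofReal s ^ n * ∫⁻ t in Ioi 0, survivorDensity l p n t
      = ∫⁻ t in Ioi 0, ∑' n, ENNReal.ofReal s ^ n * survivorDensity l p n t := by
        rw [lintegral_tsum fun n => ((measurable_survivorDensity l p n).const_mul _).aemeasurable]
        exact tsum_congr fun n => (lintegral_const_mul _ (measurable_survivorDensity l p n)).symm
    _ = ∑' j : ℕ, (∫⁻ t in Ioi 0,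
          ENNReal.ofReal (exp (-t) * (exp (-(l * t)) * (1 - exp (-(l * t))) ^ j)))
          * ENNReal.ofReal (p * s + 1 - p) ^ (j + 1) := by
        simp_rw [hpointwise]
        rw [lintegral_tsum fun j => (by fun_prop : Measurable _).aemeasurable]
        simp_rw [lintegral_mul_const' _ _ (ENNReal.pow_ne_top ENNReal.ofReal_ne_top)]
    _ = _ := by
        simp_rw [lintegral_ofReal_exp_neg_mul_exp_mul_one_sub_exp_pow hl,
          ← ENNReal.ofReal_pow hx, ← ENNReal.ofReal_mul' (pow_nonneg hx _)]

theorem yule_binomial_pgf_general (l p s : ℝ) (hl : 0 < l) (hp0 : 0 < p) (hp1 : p ≤ 1)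
    (hs0 : 0 ≤ s) :
    ∑' n : ℕ, s ^ n *
      ∫ t in Set.Ioi (0:ℝ), Real.exp (-t) *
        ∑' k : ℕ, (if max n 1 ≤ k then
          Real.exp (-(l * t)) * (1 - Real.exp (-(l * t))) ^ (k - 1) *
            (k.choose n : ℝ) * p ^ n * (1 - p) ^ (k - n)
          else 0)
      = ((p * s + 1 - p) / (l + 1)) *
        ∑' k : ℕ, (Nat.factorial k : ℝ) * (p * s + 1 - p) ^ k /
          (ascPochhammer ℝ k).eval (2 + 1 / l) := by
  show ∑' n : ℕ, s ^ n * ∫ t in Ioi 0, exp (-t) * ∑' k, survivorWeight l p n k t = _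
  have hfin : ∀ n, ENNReal.ofReal s ^ n * ∫⁻ t in Ioi 0, survivorDensity l p n t ≠ ⊤ :=
    fun n => ENNReal.mul_ne_top (ENNReal.pow_ne_top ENNReal.ofReal_ne_top) <|
      ne_top_of_le_ne_top ENNReal.one_ne_top (lintegral_survivorDensity_le_one hl.le hp0.le hp1 n)
  calc _ = ∑' n : ℕ,
        (ENNReal.ofReal s ^ n * ∫⁻ t in Ioi 0, survivorDensity l p n t).toReal := by
        simp_rw [integral_exp_neg_mul_tsum_survivorWeight hl.le hp0.le hp1, ENNReal.toReal_mul,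
          ENNReal.toReal_pow, ENNReal.toReal_ofReal hs0]
    _ = ∑' j : ℕ, collapseSizeProb l j * (p * s + 1 - p) ^ (j + 1) := by
        rw [← ENNReal.tsum_toReal_eq hfin,
          tsum_pow_mul_lintegral_survivorDensity hl hp0.le hp1 hs0,
          ENNReal.tsum_toReal_eq fun _ => ENNReal.ofReal_ne_top]
        exact tsum_congr fun j => ENNReal.toReal_ofReal <|
          mul_nonneg (collapseSizeProb_nonneg hl j) (pow_nonneg (by nlinarith) _)
    _ = _ := by
        rw [← tsum_mul_left]
        refine tsum_congr fun j => ?_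
        rw [collapseSizeProb, pow_succ]
        field_simp

/-- The probability generating function of the number of survivors in the Yule growth
(rate `l`) with binomial catastrophe (parameter `p`) scheme equals
`((ps+1-p)/(λ+1))·₂F₁(1,1;2+1/λ;ps+1-p)`, with the hypergeometric function written
as the series `∑ k! xᵏ/(2+1/λ)ₖ` at `x = ps+1-p`. -/
theorem yule_binomial_pgf (l p s : ℝ) (hl : 0 < l) (hp0 : 0 < p) (hp1 : p ≤ 1)
    (hs0 : 0 ≤ s) (hs1 : s ≤ 1) :
    ∑' n : ℕ, s ^ n *
      ∫ t in Set.Ioi (0:ℝ), Real.exp (-t) *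
        ∑' k : ℕ, (if max n 1 ≤ k then
          Real.exp (-(l * t)) * (1 - Real.exp (-(l * t))) ^ (k - 1) *
            (k.choose n : ℝ) * p ^ n * (1 - p) ^ (k - n)
          else 0)
      = ((p * s + 1 - p) / (l + 1)) *
        ∑' k : ℕ, (Nat.factorial k : ℝ) * (p * s + 1 - p) ^ k /
          (ascPochhammer ℝ k).eval (2 + 1 / l) :=
  yule_binomial_pgf_general l p s hl hp0 hp1 hs0
end

section
/- Let 0 < p ≤ 1. In the Yule growth with binomial catastrophe scheme, the mean number of survivors E(N) = ∑_{n=1}^∞ n ∫₀^∞ e^{-t} ( ∑_{j=n}^∞ e^{-λt}(1-e^{-λt})^{j-1} C(j,n) p^n (1-p)^{j-n} ) dt satisfies: if 0 < λ < 1 then E(N) = p/(1-λ), and if λ ≥ 1 then the sum diverges to infinity. -/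
open MeasureTheory Real Filter

/-!
Conditionally on `T = t`, the population `X_t` is geometric with parameter `x = e^{-λt}`, hence
has mean `e^{λt}`, and binomial thinning multiplies the mean by `p`: summing the two
negative-binomial series in closed form gives `E(N | T = t) = p e^{(λ-1)t}`. All terms are
nonnegative, so by Tonelli the series of the integrals is `∫₀^∞ p e^{(λ-1)t} dt`, which equals
`p / (1 - λ)` for `λ < 1` and is infinite for `λ ≥ 1`.
-/

lemma hasSum_of_tsum_ofReal_eq {a : ℕ → ℝ} {r : ℝ} (ha : ∀ m, 0 ≤ a m) (hr : 0 ≤ r)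
    (h : ∑' m, ENNReal.ofReal (a m) = ENNReal.ofReal r) : HasSum a r := by
  have hfin : ∑' m, ENNReal.ofReal (a m) ≠ ⊤ := h ▸ ENNReal.ofReal_ne_top
  have H := ENNReal.hasSum_toReal hfin
  rw [← ENNReal.tsum_toReal_eq fun _ => ENNReal.ofReal_ne_top, h, ENNReal.toReal_ofReal hr] at H
  simpa only [ENNReal.toReal_ofReal (ha _)] using H

lemma tendsto_sum_range_atTop_of_tsum_ofReal_eq_top {a : ℕ → ℝ} (ha : ∀ m, 0 ≤ a m)
    (h : ∑' m, ENNReal.ofReal (a m) = ⊤) :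
    Tendsto (fun M => ∑ m ∈ Finset.range M, a m) atTop atTop :=
  (not_summable_iff_tendsto_nat_atTop_of_nonneg ha).1 fun hs => hs.tsum_ofReal_ne_top h

section

variable {α : Type*} [MeasurableSpace α] {μ : Measure α} {f : ℕ → α → ℝ} {F : α → ℝ}

lemma tsum_ofReal_integral_eq_lintegral_ofReal (hf : ∀ m, Integrable (f m) μ)
    (hf0 : ∀ m, 0 ≤ᵐ[μ] f m) (hF : ∀ᵐ a ∂μ, HasSum (fun m => f m a) (F a)) :
    ∑' m, ENNReal.ofReal (∫ a, f m a ∂μ) = ∫⁻ a, ENNReal.ofReal (F a) ∂μ := by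
  simp_rw [ofReal_integral_eq_lintegral_ofReal (hf _) (hf0 _)]
  rw [← lintegral_tsum fun m => (hf m).aemeasurable.ennreal_ofReal]
  refine lintegral_congr_ae ?_
  filter_upwards [hF, ae_all_iff.2 hf0] with a ha h0
  rw [← ENNReal.ofReal_tsum_of_nonneg h0 ha.summable, ha.tsum_eq]

lemma hasSum_integral_of_nonneg (hf : ∀ m, Integrable (f m) μ)
    (hf0 : ∀ m, 0 ≤ᵐ[μ] f m) (hF : ∀ᵐ a ∂μ, HasSum (fun m => f m a) (F a))
    (hFi : Integrable F μ) : HasSum (fun m => ∫ a, f m a ∂μ) (∫ a, F a ∂μ) := by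
  have hF0 : 0 ≤ᵐ[μ] F := by
    filter_upwards [hF, ae_all_iff.2 hf0] with a ha h0
    exact ha.nonneg h0
  refine hasSum_of_tsum_ofReal_eq (fun m => integral_nonneg_of_ae (hf0 m))
    (integral_nonneg_of_ae hF0) ?_
  rw [tsum_ofReal_integral_eq_lintegral_ofReal hf hf0 hF,
    ofReal_integral_eq_lintegral_ofReal hFi hF0]

lemma tendsto_sum_integral_atTop_of_lintegral_eq_top (hf : ∀ m, Integrable (f m) μ)
    (hf0 : ∀ m, 0 ≤ᵐ[μ] f m) (hF : ∀ᵐ a ∂μ, HasSum (fun m => f m a) (F a))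
    (htop : ∫⁻ a, ENNReal.ofReal (F a) ∂μ = ⊤) :
    Tendsto (fun M => ∑ m ∈ Finset.range M, ∫ a, f m a ∂μ) atTop atTop :=
  tendsto_sum_range_atTop_of_tsum_ofReal_eq_top (fun m => integral_nonneg_of_ae (hf0 m))
    (by rw [tsum_ofReal_integral_eq_lintegral_ofReal hf hf0 hF, htop])

end

lemma integral_mul_exp_mul_Ioi {c a : ℝ} (ha : a < 0) :
    ∫ t in Set.Ioi (0 : ℝ), c * exp (a * t) = c / -a := by
  rw [integral_const_mul, integral_exp_mul_Ioi ha, mul_zero, exp_zero]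
  ring

lemma lintegral_ofReal_mul_exp_mul_Ioi_eq_top {c a : ℝ} (hc : 0 < c) (ha : 0 ≤ a) :
    ∫⁻ t in Set.Ioi (0 : ℝ), ENNReal.ofReal (c * exp (a * t)) = ⊤ := by
  refine eq_top_iff.2 ?_
  calc (⊤ : ENNReal) = ∫⁻ _ in Set.Ioi (0 : ℝ), ENNReal.ofReal c := by
        rw [setLIntegral_const, Real.volume_Ioi, ENNReal.mul_top (by simpa using hc)]
    _ ≤ _ := by
        refine setLIntegral_mono' measurableSet_Ioi fun t ht => ENNReal.ofReal_le_ofReal ?_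
        exact le_mul_of_one_le_right hc.le (one_le_exp (mul_nonneg ha (le_of_lt ht)))

/-- `P(N = m + 1)` when the population is geometric with parameter `x`: the closed form of the
inner series over `j ≥ m + 1`. -/
noncomputable def survivorProb (x p : ℝ) (m : ℕ) : ℝ :=
  x * (1 - x) ^ m * p ^ (m + 1) / (x + p * (1 - x)) ^ (m + 2)

lemma survivorProb_nonneg {x p : ℝ} (hx0 : 0 ≤ x) (hx1 : x ≤ 1) (hp : 0 ≤ p) (m : ℕ) :
    0 ≤ survivorProb x p m := by
  have : 0 ≤ 1 - x := by linarith
  unfold survivorProb; positivity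

lemma survivorProb_le_one {x p : ℝ} (hx0 : 0 ≤ x) (hx1 : x ≤ 1) (hp0 : 0 ≤ p) (hp1 : p ≤ 1)
    (m : ℕ) : survivorProb x p m ≤ 1 := by
  set D := x + p * (1 - x)
  have hq : 0 ≤ 1 - x := by linarith
  have hxD : x ≤ D := le_add_of_nonneg_right (mul_nonneg hp0 hq)
  have hpD : p ≤ D := by nlinarith
  have hqD : p * (1 - x) ≤ D := le_add_of_nonneg_left hx0
  apply div_le_one_of_le₀ _ (by positivity)
  calc x * (1 - x) ^ m * p ^ (m + 1) = x * (p * (1 - x)) ^ m * p := by rw [mul_pow]; ring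
    _ ≤ D * D ^ m * D := by gcongr
    _ = D ^ (m + 2) := by ring

lemma hasSum_survivorProb {x p : ℝ} (hx0 : 0 < x) (hx1 : x ≤ 1) (hp0 : 0 ≤ p) (hp1 : p ≤ 1)
    (m : ℕ) :
    HasSum (fun k : ℕ => x * (1 - x) ^ (k + m) * ((k + m + 1).choose (m + 1) : ℝ) *
      p ^ (m + 1) * (1 - p) ^ k) (survivorProb x p m) := by
  have hr : ‖(1 - x) * (1 - p)‖ < 1 := by
    rw [Real.norm_eq_abs, abs_of_nonneg (by nlinarith)]
    nlinarith
  have hterm : ∀ k : ℕ, x * (1 - x) ^ (k + m) * ((k + m + 1).choose (m + 1) : ℝ) *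
      p ^ (m + 1) * (1 - p) ^ k = x * (1 - x) ^ m * p ^ (m + 1) *
        (((k + (m + 1)).choose (m + 1) : ℝ) * ((1 - x) * (1 - p)) ^ k) := fun k => by
    rw [← add_assoc, mul_pow, pow_add]; ring
  have hsum : survivorProb x p m = x * (1 - x) ^ m * p ^ (m + 1) *
      (1 / (1 - (1 - x) * (1 - p)) ^ (m + 1 + 1)) := by
    unfold survivorProb; ring
  simpa only [hterm, hsum] using
    (hasSum_choose_mul_geometric_of_norm_lt_one (m + 1) hr).mul_left
      (x * (1 - x) ^ m * p ^ (m + 1))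

lemma hasSum_succ_mul_survivorProb {x p : ℝ} (hx0 : 0 < x) (hx1 : x ≤ 1) (hp : 0 ≤ p) :
    HasSum (fun m : ℕ => ((m : ℝ) + 1) * survivorProb x p m) (p / x) := by
  set D := x + p * (1 - x)
  have hq : 0 ≤ 1 - x := by linarith
  have hD : 0 < D := add_pos_of_pos_of_nonneg hx0 (mul_nonneg hp hq)
  have hr : ‖p * (1 - x) / D‖ < 1 := by
    rw [Real.norm_eq_abs, abs_of_nonneg (by positivity), div_lt_one hD]
    exact lt_add_of_pos_left _ hx0
  have hterm : ∀ m : ℕ, ((m : ℝ) + 1) * survivorProb x p m =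
      x * p / D ^ 2 * (((m + 1).choose 1 : ℝ) * (p * (1 - x) / D) ^ m) := fun m => by
    rw [survivorProb, Nat.choose_one_right, div_pow, mul_pow, pow_add D m 2, pow_succ p m]
    push_cast
    field_simp
  have hsum : p / x = x * p / D ^ 2 * (1 / (1 - p * (1 - x) / D) ^ (1 + 1)) := by
    have : 1 - p * (1 - x) / D = x / D := by field_simp; ring
    rw [this, div_pow]
    field_simp
    ring
  simpa only [hterm, hsum] using
    (hasSum_choose_mul_geometric_of_norm_lt_one 1 hr).mul_left (x * p / D ^ 2)

lemma exp_neg_mul_mem_Ioc {l t : ℝ} (hl : 0 ≤ l) (ht : 0 < t) :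
    exp (-(l * t)) ∈ Set.Ioc 0 1 :=
  ⟨exp_pos _, exp_le_one_iff.2 (neg_nonpos.2 (mul_nonneg hl ht.le))⟩

noncomputable def survivorIntegrand (l p : ℝ) (m : ℕ) (t : ℝ) : ℝ :=
  ((m : ℝ) + 1) * (exp (-t) * survivorProb (exp (-(l * t))) p m)

section

variable {l p : ℝ}

lemma survivorIntegrand_nonneg (hl : 0 ≤ l) (hp0 : 0 ≤ p) (m : ℕ) {t : ℝ} (ht : 0 < t) :
    0 ≤ survivorIntegrand l p m t := by
  obtain ⟨hx0, hx1⟩ := exp_neg_mul_mem_Ioc hl ht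
  unfold survivorIntegrand
  have := survivorProb_nonneg hx0.le hx1 hp0 m
  positivity

lemma integrableOn_survivorIntegrand (hl : 0 ≤ l) (hp0 : 0 ≤ p) (hp1 : p ≤ 1) (m : ℕ) :
    IntegrableOn (survivorIntegrand l p m) (Set.Ioi 0) := by
  refine ((integrableOn_exp_neg_Ioi 0).const_mul ((m : ℝ) + 1)).mono'
    (show Measurable (survivorIntegrand l p m) by
      unfold survivorIntegrand survivorProb; fun_prop).aestronglyMeasurable ?_
  filter_upwards [ae_restrict_mem measurableSet_Ioi] with t ht
  obtain ⟨hx0, hx1⟩ := exp_neg_mul_mem_Ioc hl ht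
  rw [norm_of_nonneg (survivorIntegrand_nonneg hl hp0 m ht), survivorIntegrand]
  gcongr
  exact mul_le_of_le_one_right (exp_pos _).le (survivorProb_le_one hx0.le hx1 hp0 hp1 m)

lemma hasSum_survivorIntegrand (hl : 0 ≤ l) (hp0 : 0 ≤ p) {t : ℝ} (ht : 0 < t) :
    HasSum (fun m => survivorIntegrand l p m t) (p * exp ((l - 1) * t)) := by
  obtain ⟨hx0, hx1⟩ := exp_neg_mul_mem_Ioc hl ht
  have hval : exp (-t) * (p / exp (-(l * t))) = p * exp ((l - 1) * t) := by
    rw [mul_div_left_comm, ← exp_sub]; ring_nf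
  rw [← hval]
  simpa only [survivorIntegrand, mul_left_comm ((_ : ℝ) + 1)] using
    (hasSum_succ_mul_survivorProb hx0 hx1 hp0).mul_left (exp (-t))

end

/-- The mean number of survivors in the Yule growth (rate `l`) with binomial
catastrophe (parameter `p`) scheme: `E(N) = p/(1-λ)` if `λ < 1`, and the series
defining `E(N)` diverges to infinity if `λ ≥ 1`.  The outer sum over `n ≥ 1` is
written by reindexing `n = m + 1`, and the inner sum over `j ≥ n` by `j = k + n`. -/
theorem yule_binomial_mean_survivors (l p : ℝ) (hl : 0 < l) (hp0 : 0 < p) (hp1 : p ≤ 1) :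
    (l < 1 →
      ∑' m : ℕ, ((m : ℝ) + 1) *
        ∫ t in Set.Ioi (0:ℝ), Real.exp (-t) *
          ∑' k : ℕ, Real.exp (-(l * t)) * (1 - Real.exp (-(l * t))) ^ (k + m) *
            ((k + m + 1).choose (m + 1) : ℝ) * p ^ (m + 1) * (1 - p) ^ k
        = p / (1 - l)) ∧
    (1 ≤ l →
      Tendsto (fun M : ℕ => ∑ m ∈ Finset.range M, ((m : ℝ) + 1) *
        ∫ t in Set.Ioi (0:ℝ), Real.exp (-t) *
          ∑' k : ℕ, Real.exp (-(l * t)) * (1 - Real.exp (-(l * t))) ^ (k + m) *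
            ((k + m + 1).choose (m + 1) : ℝ) * p ^ (m + 1) * (1 - p) ^ k)
        atTop atTop) := by
  have hterm : ∀ m : ℕ, ((m : ℝ) + 1) * ∫ t in Set.Ioi (0:ℝ), Real.exp (-t) *
      ∑' k : ℕ, Real.exp (-(l * t)) * (1 - Real.exp (-(l * t))) ^ (k + m) *
        ((k + m + 1).choose (m + 1) : ℝ) * p ^ (m + 1) * (1 - p) ^ k =
      ∫ t in Set.Ioi (0:ℝ), survivorIntegrand l p m t := fun m => by
    rw [← integral_const_mul]
    refine setIntegral_congr_fun measurableSet_Ioi fun t ht => ?_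
    obtain ⟨hx0, hx1⟩ := exp_neg_mul_mem_Ioc hl.le ht
    rw [(hasSum_survivorProb hx0 hx1 hp0.le hp1 m).tsum_eq, survivorIntegrand]
  have hf := integrableOn_survivorIntegrand hl.le hp0.le hp1
  have hf0 : ∀ m, 0 ≤ᵐ[volume.restrict (Set.Ioi 0)] survivorIntegrand l p m := fun m =>
    (ae_restrict_mem measurableSet_Ioi).mono fun t ht => survivorIntegrand_nonneg hl.le hp0.le m ht
  have hF : ∀ᵐ t ∂volume.restrict (Set.Ioi 0),
      HasSum (fun m => survivorIntegrand l p m t) (p * exp ((l - 1) * t)) :=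
    (ae_restrict_mem measurableSet_Ioi).mono fun t ht => hasSum_survivorIntegrand hl.le hp0.le ht
  simp only [hterm]
  refine ⟨fun hl1 => ?_, fun hl1 => ?_⟩
  · rw [(hasSum_integral_of_nonneg hf hf0 hF
      ((integrableOn_exp_mul_Ioi (by linarith) 0).const_mul p)).tsum_eq,
      integral_mul_exp_mul_Ioi (by linarith), neg_sub]
  · exact tendsto_sum_integral_atTop_of_lintegral_eq_top hf hf0 hF
      (lintegral_ofReal_mul_exp_mul_Ioi_eq_top hp0 (by linarith))
end

section
/- Let λ > 0, 0 ≤ p ≤ 1 and let d ≥ 1 be an integer. Let E = (1-p)/(1+λp) + ∑_{n=1}^∞ (d/(d+1))^n · (λ/(λ+1))^{n-1} · p/(λp+1), i.e. E = E[(d/(d+1))^N] for the Poisson growth with geometric catastrophe survivor distribution. Then E ≥ d/(d+1) if and only if (λ²d + λd + λ + d + 1)p ≤ λ + d + 1. -/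
/-- Corollary 3.2 (i): for the Poisson growth (rate `l`) with geometric catastrophe
(parameter `p`) survivor distribution, `E[(d/(d+1))^N] ≥ d/(d+1)` (the extinction
condition on the tree `T^d`) if and only if `(λ²d+λd+λ+d+1)p ≤ λ+d+1`.
The sum over `n ≥ 1` is written by reindexing `n = m + 1`. -/
theorem poisson_geometric_extinction_condition (l p : ℝ) (hl : 0 < l)
    (hp0 : 0 ≤ p) (hp1 : p ≤ 1) (d : ℕ) (hd : 1 ≤ d) :
    ((1 - p) / (1 + l * p) +
        ∑' m : ℕ, ((d : ℝ) / (d + 1)) ^ (m + 1) * (l / (l + 1)) ^ m * (p / (l * p + 1))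
        ≥ (d : ℝ) / (d + 1))
      ↔ (l ^ 2 * d + l * d + l + d + 1) * p ≤ l + d + 1 := by
  set D : ℝ := (d : ℝ) with hDdef
  have hD1 : (1 : ℝ) ≤ D := by rw [hDdef]; exact_mod_cast hd
  have hD0 : 0 < D := by linarith
  have hD1' : 0 < D + 1 := by linarith
  have hl1 : 0 < l + 1 := by linarith
  have hA : 0 < 1 + l * p := by nlinarith
  have hA' : 0 < l * p + 1 := by linarith
  have hU : 0 < D + l + 1 := by linarith
  set r : ℝ := D / (D + 1) * (l / (l + 1)) with hrdef
  have hr0 : 0 ≤ r := by positivity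
  have hr1 : r < 1 := by
    have h1 : D / (D + 1) < 1 := by
      rw [div_lt_one hD1']; linarith
    have h2 : l / (l + 1) < 1 := by
      rw [div_lt_one hl1]; linarith
    have h3 : 0 ≤ l / (l + 1) := by positivity
    calc r ≤ 1 * (l / (l + 1)) := by
            apply mul_le_mul_of_nonneg_right (le_of_lt h1) h3
      _ = l / (l + 1) := one_mul _
      _ < 1 := h2
  have hsum : ∑' m : ℕ, (D / (D + 1)) ^ (m + 1) * (l / (l + 1)) ^ m * (p / (l * p + 1))
      = (D / (D + 1) * (p / (l * p + 1))) * (1 - r)⁻¹ := by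
    have h1 : ∀ m : ℕ, (D / (D + 1)) ^ (m + 1) * (l / (l + 1)) ^ m * (p / (l * p + 1))
        = (D / (D + 1) * (p / (l * p + 1))) * r ^ m := by
      intro m
      rw [hrdef, mul_pow, pow_succ]
      ring
    rw [tsum_congr h1, tsum_mul_left, tsum_geometric_of_lt_one hr0 hr1]
  rw [hsum]
  have hrne : 1 - r ≠ 0 := by linarith
  have key : (1 - p) / (1 + l * p) + (D / (D + 1) * (p / (l * p + 1))) * (1 - r)⁻¹
      = D / (D + 1)
        + ((l + D + 1) - (l ^ 2 * D + l * D + l + D + 1) * p)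
          / ((1 + l * p) * (D + 1) * (D + l + 1)) := by
    have h1r : 1 - r = (D + l + 1) / ((D + 1) * (l + 1)) := by
      rw [hrdef]; field_simp; ring
    rw [h1r, inv_div]
    field_simp
    ring
  rw [key, ge_iff_le, le_add_iff_nonneg_right]
  have hden : 0 < (1 + l * p) * (D + 1) * (D + l + 1) := by positivity
  rw [div_nonneg_iff]
  constructor
  · rintro (⟨h1, _⟩ | ⟨_, h2⟩)
    · linarith
    · linarith
  · intro h
    exact Or.inl ⟨by linarith, le_of_lt hden⟩
end

section
/- Let λ > 0, 0 ≤ p ≤ 1 and let d ≥ 1 be an integer. Let E = (1-p)/(1+λp) + ∑_{n=1}^∞ (d/(d+1))^n · (λ/(λ+1))^{n-1} · p/(λp+1), i.e. E = E[(d/(d+1))^N] for the Poisson growth with geometric catastrophe survivor distribution. Then E < (d-1)/d if and only if (λ²d - λ² + λd - λ + d)p > λ + d + 1. -/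
/-- Corollary 3.2 (ii): for the Poisson growth (rate `l`) with geometric catastrophe
(parameter `p`) survivor distribution, `E[(d/(d+1))^N] < (d-1)/d` (the survival
condition on the tree `T^d`) if and only if `(λ²d-λ²+λd-λ+d)p > λ+d+1`.
The sum over `n ≥ 1` is written by reindexing `n = m + 1`. -/
theorem poisson_geometric_survival_condition (l p : ℝ) (hl : 0 < l)
    (hp0 : 0 ≤ p) (hp1 : p ≤ 1) (d : ℕ) (hd : 1 ≤ d) :
    ((1 - p) / (1 + l * p) +
        ∑' m : ℕ, ((d : ℝ) / (d + 1)) ^ (m + 1) * (l / (l + 1)) ^ m * (p / (l * p + 1))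
        < ((d : ℝ) - 1) / d)
      ↔ (l ^ 2 * d - l ^ 2 + l * d - l + d) * p > l + d + 1 := by
  set D : ℝ := (d : ℝ) with hDdef
  have hd1 : (1 : ℝ) ≤ D := by rw [hDdef]; exact_mod_cast hd
  have hD : 0 < D := by linarith
  have hD1 : 0 < D + 1 := by linarith
  have hl1 : 0 < l + 1 := by linarith
  have hlp : 0 < l * p + 1 := by nlinarith
  have hDl : 0 < D + l + 1 := by linarith
  set r : ℝ := D / (D + 1) * (l / (l + 1)) with hrdef
  have hr_eq : r = D * l / ((D + 1) * (l + 1)) := by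
    rw [hrdef, div_mul_div_comm]
  have hr0 : 0 ≤ r := by
    rw [hr_eq]
    positivity
  have hr1 : r < 1 := by
    rw [hr_eq, div_lt_one (by positivity)]
    nlinarith
  have hterm : ∀ m : ℕ,
      (D / (D + 1)) ^ (m + 1) * (l / (l + 1)) ^ m * (p / (l * p + 1))
        = (D / (D + 1) * (p / (l * p + 1))) * r ^ m := by
    intro m
    rw [hrdef]
    ring
  have hsum : (∑' m : ℕ, (D / (D + 1)) ^ (m + 1) * (l / (l + 1)) ^ m * (p / (l * p + 1)))
      = (D / (D + 1) * (p / (l * p + 1))) * (1 - r)⁻¹ := by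
    calc (∑' m : ℕ, (D / (D + 1)) ^ (m + 1) * (l / (l + 1)) ^ m * (p / (l * p + 1)))
        = ∑' m : ℕ, (D / (D + 1) * (p / (l * p + 1))) * r ^ m := by
          exact tsum_congr hterm
      _ = (D / (D + 1) * (p / (l * p + 1))) * ∑' m : ℕ, r ^ m := tsum_mul_left
      _ = (D / (D + 1) * (p / (l * p + 1))) * (1 - r)⁻¹ := by
          rw [tsum_geometric_of_lt_one hr0 hr1]
  rw [hsum]
  have h1r : 1 - r = (D + l + 1) / ((D + 1) * (l + 1)) := by
    rw [hr_eq]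
    field_simp
    ring
  have hkey : (1 - p) / (1 + l * p) + (D / (D + 1) * (p / (l * p + 1))) * (1 - r)⁻¹
      = ((1 - p) * (D + l + 1) + D * (l + 1) * p) / ((l * p + 1) * (D + l + 1)) := by
    rw [h1r]
    field_simp
    ring
  rw [hkey, div_lt_div_iff₀ (by positivity) hD]
  constructor
  · intro h
    nlinarith
  · intro h
    nlinarith
end

section
/- Let λ > 0 and 0 < p ≤ 1, and define g : [0,1] → ℝ by g(s) = (1/(λp+1)) · ( 1 - p + (λ+1)ps/(1+λ-λs) ), the probability generating function of the number of survivors in the Poisson growth with geometric catastrophe scheme. Then the smallest s ∈ [0,1] with g(s) = s equals min{1, (1-p)(1+λ)/(λ(λp+1))}. Consequently, the extinction probability ν of the associated Galton–Watson-type limit satisfies 1 - ν = max{0, (p(λ²+λ+1) - 1)/(λ(1+λp))}. -/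
/-- For the probability generating function `g` of the Poisson growth (rate `l`) with
geometric catastrophe (parameter `p`) survivor distribution, the smallest fixed point
of `g` in `[0,1]` is `min{1, (1-p)(1+λ)/(λ(λp+1))}`; consequently the limiting
survival probability `1 - ν` equals `max{0, (p(λ²+λ+1)-1)/(λ(1+λp))}`. -/
theorem poisson_geometric_smallest_fixed_point (l p : ℝ) (hl : 0 < l)
    (hp0 : 0 < p) (hp1 : p ≤ 1)
    (g : ℝ → ℝ)
    (hg : ∀ s, g s = (1 / (l * p + 1)) * (1 - p + (l + 1) * p * s / (1 + l - l * s))) :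
    IsLeast {s : ℝ | s ∈ Set.Icc (0:ℝ) 1 ∧ g s = s}
        (min 1 ((1 - p) * (1 + l) / (l * (l * p + 1)))) ∧
      1 - min 1 ((1 - p) * (1 + l) / (l * (l * p + 1)))
        = max 0 ((p * (l ^ 2 + l + 1) - 1) / (l * (1 + l * p))) := by
  have hD : 0 < l * (l * p + 1) := by positivity
  have hlp1 : (0:ℝ) < l * p + 1 := by positivity
  set r : ℝ := (1 - p) * (1 + l) / (l * (l * p + 1)) with hrdef
  have hr0 : 0 ≤ r := by
    apply div_nonneg
    · nlinarith
    · exact le_of_lt hD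
  have hrD : l * (l * p + 1) * r = (1 - p) * (1 + l) := by
    rw [hrdef]; field_simp
  have key : ∀ s : ℝ, s ≤ 1 → (g s = s ↔ (s = 1 ∨ s = r)) := by
    intro s hs
    have hden : (0:ℝ) < 1 + l - l * s := by nlinarith
    rw [hg s]
    constructor
    · intro h
      have h2 : l * (l * p + 1) * (s - 1) * (s - r) = 0 := by
        field_simp at h
        nlinarith [hrD, h]
      have h3 : (s - 1) * (s - r) = 0 := by
        rcases mul_eq_zero.1 h2 with h4 | h4
        · have h6 : s - 1 = 0 := by
            rcases mul_eq_zero.1 h4 with h5 | h5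
            · exact absurd h5 (ne_of_gt hD)
            · exact h5
          rw [h6]; ring
        · rw [h4]; ring
      rcases mul_eq_zero.1 h3 with h4 | h4
      · left; linarith
      · right; linarith
    · rintro (h | h) <;> subst h
      · field_simp; ring
      · have : 1 + l - l * r ≠ 0 := by nlinarith
        field_simp
        nlinarith [hrD]
  refine ⟨⟨⟨⟨le_min zero_le_one hr0, min_le_left _ _⟩, ?_⟩, ?_⟩, ?_⟩
  · rcases min_cases 1 r with ⟨h1, _⟩ | ⟨h1, h2⟩
    · rw [h1]; exact (key 1 le_rfl).2 (Or.inl rfl)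
    · rw [h1]; exact (key r (le_of_lt h2)).2 (Or.inr rfl)
  · rintro s ⟨⟨hs0, hs1⟩, hgs⟩
    rcases (key s hs1).1 hgs with h | h
    · subst h; exact min_le_left _ _
    · subst h; exact min_le_right _ _
  · have hval : (p * (l ^ 2 + l + 1) - 1) / (l * (1 + l * p)) = 1 - r := by
      rw [eq_sub_iff_add_eq, hrdef]
      field_simp
      ring
    rw [hval]
    rcases le_total r 1 with h | h
    · rw [min_eq_right h, max_eq_right (by linarith)]
    · rw [min_eq_left h, max_eq_left (by linarith)]
      ring
end

section
/- Let d ≥ 2 and n ≥ 0 be integers, and let T(n,k) = ∑_{i=0}^{k} (-1)^i C(k,i) (k-i)^n be the number of surjective functions from an n-element set onto a k-element set. Then ∑_{y=0}^{d} y(y-1) · C(d,y) · ( T(n,y) + T(n,y+1) ) = d(d-1) · ( (d+1)^n - 2d^n + (d-1)^n ). (Equivalently: if n individuals each independently choose one of d+1 vertices uniformly at random and Y is the number of distinct vertices chosen among a fixed subset of d of them, then E(Y(Y-1)) = d(d-1)[1 - 2(d/(d+1))^n + ((d-1)/(d+1))^n].) -/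
/-!
`T(n,k)` is the `k`-th forward difference of `x ↦ xⁿ` at `0`, so `T(n,y) + T(n,y+1)` is the
`y`-th forward difference at `1`. Writing `y(y-1) = 2·C(y,2)` and using
`C(d,y)·C(y,2) = C(d,2)·C(d-2,y-2)`, the sum becomes `2·C(d,2)·Δ²(∑ₖ C(d-2,k) Δᵏ)(xⁿ)(1)`, and
Newton's forward formula `(1 + Δ)^(d-2) = shift by d-2` turns it into `d(d-1)·Δ²(xⁿ)(d-1)`.
-/
/-- `surjCount n k = T(n,k)`, the number of surjective functions from an `n`-element
set onto a `k`-element set, by inclusion-exclusion. -/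
def surjCount (n k : ℕ) : ℤ :=
  ∑ i ∈ Finset.range (k + 1), (-1) ^ i * (k.choose i : ℤ) * ((k - i : ℕ) : ℤ) ^ n

open Finset fwdDiff

section

variable {M G : Type*} [AddCommMonoid M] [AddCommGroup G] (h : M)

theorem fwdDiff_iter_add_fwdDiff_iter_succ (f : M → G) (k : ℕ) (y : M) :
    Δ_[h] ^[k] f y + Δ_[h] ^[k + 1] f y = Δ_[h] ^[k] f (y + h) := by
  rw [Function.iterate_succ_apply', fwdDiff, add_sub_cancel]

theorem sum_choose_mul_choose_smul_fwdDiff_iter (f : M → G) (d j : ℕ) (x : M) :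
    ∑ y ∈ range (d + 1), (d.choose y * y.choose j) • Δ_[h] ^[y] f x
      = d.choose j • Δ_[h] ^[j] f (x + (d - j) • h) := by
  rcases le_or_gt j d with hjd | hdj
  · obtain ⟨m, rfl⟩ := Nat.exists_eq_add_of_le hjd
    rw [add_assoc, sum_range_add, Nat.add_sub_cancel_left,
      shift_eq_sum_fwdDiff_iter h (Δ_[h] ^[j] f) m x, smul_sum]
    rw [sum_eq_zero fun y hy => by
      rw [Nat.choose_eq_zero_of_lt (mem_range.mp hy), mul_zero, zero_smul], zero_add]
    refine sum_congr rfl fun k _ => ?_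
    rw [Nat.choose_mul (Nat.le_add_right j k), Nat.add_sub_cancel_left, Nat.add_sub_cancel_left,
      mul_smul, add_comm j k, Function.iterate_add_apply]
  · rw [Nat.choose_eq_zero_of_lt hdj, zero_smul]
    exact sum_eq_zero fun y hy => by
      rw [Nat.choose_eq_zero_of_lt ((mem_range.mp hy).trans_le hdj), mul_zero, zero_smul]

end

theorem surjCount_eq_fwdDiff_iter (n k : ℕ) :
    surjCount n k = Δ_[1] ^[k] (fun x : ℕ => (x : ℤ) ^ n) 0 := by
  rw [fwdDiff_iter_eq_sum_shift, surjCount, ← sum_range_reflect]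
  refine sum_congr rfl fun i hi => ?_
  have hik : i ≤ k := Nat.lt_succ_iff.mp (mem_range.mp hi)
  rw [Nat.add_sub_cancel, Nat.sub_sub_self hik, Nat.choose_symm hik, smul_eq_mul, zero_add,
    smul_eq_mul, mul_one]

theorem surjCount_add_surjCount_succ (n k : ℕ) :
    surjCount n k + surjCount n (k + 1) = Δ_[1] ^[k] (fun x : ℕ => (x : ℤ) ^ n) 1 := by
  rw [surjCount_eq_fwdDiff_iter, surjCount_eq_fwdDiff_iter, fwdDiff_iter_add_fwdDiff_iter_succ]

/-- Second factorial moment identity in the move-forward-or-die model: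
`∑_{y=0}^{d} y(y-1)·C(d,y)·(T(n,y)+T(n,y+1)) = d(d-1)((d+1)ⁿ - 2dⁿ + (d-1)ⁿ)`. -/
theorem sum_mul_sub_one_choose_surjCount_add (d n : ℕ) (hd : 2 ≤ d) :
    ∑ y ∈ Finset.range (d + 1),
        (y : ℤ) * ((y : ℤ) - 1) * (d.choose y : ℤ) * (surjCount n y + surjCount n (y + 1))
      = (d : ℤ) * ((d : ℤ) - 1) *
        (((d : ℤ) + 1) ^ n - 2 * (d : ℤ) ^ n + ((d : ℤ) - 1) ^ n) := by
  obtain ⟨m, rfl⟩ := Nat.exists_eq_add_of_le' hd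
  have two_mul_choose_two (y : ℕ) : (y : ℤ) * ((y : ℤ) - 1) = 2 * (y.choose 2 : ℤ) := by
    rw [← Nat.cast_descFactorial_two, Nat.descFactorial_eq_factorial_mul_choose]; simp
  calc _ = 2 * ∑ y ∈ range (m + 2 + 1),
          ((m + 2).choose y * y.choose 2) • Δ_[1] ^[y] (fun x : ℕ => (x : ℤ) ^ n) 1 := by
        rw [mul_sum]
        refine sum_congr rfl fun y _ => ?_
        rw [surjCount_add_surjCount_succ, two_mul_choose_two, nsmul_eq_mul]
        push_cast; ring
    _ = 2 * ((m + 2).choose 2 • Δ_[1] ^[2] (fun x : ℕ => (x : ℤ) ^ n) (m + 1)) := by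
        rw [sum_choose_mul_choose_smul_fwdDiff_iter, Nat.add_sub_cancel, smul_eq_mul, mul_one,
          add_comm 1 m]
    _ = _ := by
        rw [nsmul_eq_mul, ← mul_assoc, ← two_mul_choose_two]
        simp only [fwdDiff, Function.iterate_succ_apply', Function.iterate_zero_apply]
        push_cast
        ring
end

section
/- Let λ > 0 and p = 1/(λ² + λ + 1), and define g : [0,1] → [0,1] by g(s) = (1/(λp+1)) · ( 1 - p + (λ+1)ps/(1+λ-λs) ). Then for every integer m ≥ 0, the (m+1)-fold iterate satisfies g^{∘(m+1)}(0) = (m+1)λ / ((m+1)λ + 1). -/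
lemma pg_step (l : ℝ) (hl : 0 < l) (k : ℝ) (hk : 0 ≤ k) :
    (1 / (l * (1 / (l ^ 2 + l + 1)) + 1)) *
      (1 - (1 / (l ^ 2 + l + 1)) +
        (l + 1) * (1 / (l ^ 2 + l + 1)) * (k * l / (k * l + 1)) /
          (1 + l - l * (k * l / (k * l + 1))))
      = (k + 1) * l / ((k + 1) * l + 1) := by
  have h1 : (0:ℝ) < l ^ 2 + l + 1 := by positivity
  have h2 : (0:ℝ) < k * l + 1 := by positivity
  have h3 : (0:ℝ) < (k + 1) * l + 1 := by positivity
  have h4 : l * (1 / (l ^ 2 + l + 1)) + 1 > 0 := by positivity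
  have h5 : 1 + l - l * (k * l / (k * l + 1)) = (k * l + 1 + l) / (k * l + 1) := by
    field_simp; ring
  have h6 : (0:ℝ) < k * l + 1 + l := by positivity
  rw [h5]
  field_simp
  ring

/-- Corollary 3.7 (ii), critical case `p = 1/(λ²+λ+1)`: the iterates at `0` of the
probability generating function `g` of the Poisson growth with geometric catastrophe
survivor distribution satisfy `g^{∘(m+1)}(0) = (m+1)λ/((m+1)λ+1)`, i.e. the limiting
reach `M` satisfies `P(M ≤ m) = (m+1)λ/((m+1)λ+1)`. -/
theorem poisson_geometric_critical_iterate (l : ℝ) (hl : 0 < l) (p : ℝ)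
    (hp : p = 1 / (l ^ 2 + l + 1)) (m : ℕ) :
    (fun s => (1 / (l * p + 1)) * (1 - p + (l + 1) * p * s / (1 + l - l * s)))^[m + 1] 0
      = ((m : ℝ) + 1) * l / (((m : ℝ) + 1) * l + 1) := by
  subst hp
  induction m with
  | zero =>
      rw [Function.iterate_succ_apply', Function.iterate_zero_apply]
      have := pg_step l hl 0 le_rfl
      norm_num at this ⊢
      convert this using 2
  | succ n ih =>
      rw [Function.iterate_succ_apply', ih]
      have := pg_step l hl ((n : ℝ) + 1) (by positivity)
      simp only [this]
      push_cast
      ring_nf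
end
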